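/- arXiv:1011.5722 — 2 statements merged into one kernel-verified Lean document; each statement's English description precedes it below -/
import Mathlib

section
/- Under the exact-power tail condition, (nℓ_x)^{1/ρ_x}(φ(x) − φ̂_1(x)) converges in distribution, as n → ∞, to the Weibull(1, ρ_x) distribution. -/
open MeasureTheory ProbabilityTheory Filter Set Asymptotics Topology

noncomputable section

namespace FrontierEV

variable {Ω : Type*} [MeasureSpace Ω] {p : ℕ}

/-- Joint distribution function `F(x,y) = P(X ≤ x, Y ≤ y)` of the pair `(X 0, Y 0)`
(inequalities on `Fin p → ℝ` are componentwise). -/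
def jointF (X : ℕ → Ω → (Fin p → ℝ)) (Y : ℕ → Ω → ℝ) (x : Fin p → ℝ) (y : ℝ) : ℝ :=
  (ℙ {ω | X 0 ω ≤ x ∧ Y 0 ω ≤ y}).toReal

/-- Marginal distribution function `F_X(x) = P(X ≤ x)`. -/
def margF (X : ℕ → Ω → (Fin p → ℝ)) (x : Fin p → ℝ) : ℝ :=
  (ℙ {ω | X 0 ω ≤ x}).toReal

/-- Conditional distribution function `F(y|x) = F(x,y)/F_X(x)` of `Y` given `X ≤ x`. -/
def condF (X : ℕ → Ω → (Fin p → ℝ)) (Y : ℕ → Ω → ℝ) (x : Fin p → ℝ) (y : ℝ) : ℝ :=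
  jointF X Y x y / margF X x

/-- The frontier function `φ(x) = sup {y ≥ 0 : F(y|x) < 1}`. -/
def phi (X : ℕ → Ω → (Fin p → ℝ)) (Y : ℕ → Ω → ℝ) (x : Fin p → ℝ) : ℝ :=
  sSup {y : ℝ | 0 ≤ y ∧ condF X Y x y < 1}

/-- The conditional quantile `φ_α(x) = inf {y ≥ 0 : F(y|x) ≥ α}`. -/
def condQ (X : ℕ → Ω → (Fin p → ℝ)) (Y : ℕ → Ω → ℝ) (α : ℝ) (x : Fin p → ℝ) : ℝ :=
  sInf {y : ℝ | 0 ≤ y ∧ α ≤ condF X Y x y}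

open Classical in
/-- Empirical joint distribution function. -/
def empJointF (X : ℕ → Ω → (Fin p → ℝ)) (Y : ℕ → Ω → ℝ) (n : ℕ) (x : Fin p → ℝ) (y : ℝ)
    (ω : Ω) : ℝ :=
  (∑ i ∈ Finset.range n, if X i ω ≤ x ∧ Y i ω ≤ y then (1 : ℝ) else 0) / n

open Classical in
/-- Empirical marginal distribution function. -/
def empMargF (X : ℕ → Ω → (Fin p → ℝ)) (n : ℕ) (x : Fin p → ℝ) (ω : Ω) : ℝ :=
  (∑ i ∈ Finset.range n, if X i ω ≤ x then (1 : ℝ) else 0) / n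

/-- Empirical conditional distribution function. -/
def empCondF (X : ℕ → Ω → (Fin p → ℝ)) (Y : ℕ → Ω → ℝ) (n : ℕ) (x : Fin p → ℝ) (y : ℝ)
    (ω : Ω) : ℝ :=
  empJointF X Y n x y ω / empMargF X n x ω

/-- Empirical conditional quantile `φ̂_α(x)`. -/
def empCondQ (X : ℕ → Ω → (Fin p → ℝ)) (Y : ℕ → Ω → ℝ) (n : ℕ) (α : ℝ) (x : Fin p → ℝ)
    (ω : Ω) : ℝ :=
  sInf {y : ℝ | 0 ≤ y ∧ α ≤ empCondF X Y n x y ω}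

/-- The FDH estimator `φ̂_1(x) = max {Y_i : X_i ≤ x, i < n}`. -/
def fdh (X : ℕ → Ω → (Fin p → ℝ)) (Y : ℕ → Ω → ℝ) (n : ℕ) (x : Fin p → ℝ) (ω : Ω) : ℝ :=
  sSup {y : ℝ | ∃ i < n, X i ω ≤ x ∧ Y i ω = y}

/-- The data `(X_i, Y_i)` are i.i.d. copies of `(X 0, Y 0)`. -/
def IID (X : ℕ → Ω → (Fin p → ℝ)) (Y : ℕ → Ω → ℝ) : Prop :=
  (∀ i, Measurable fun ω => (X i ω, Y i ω)) ∧
  iIndepFun (fun i ω => (X i ω, Y i ω)) ℙ ∧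
  ∀ i, IdentDistrib (fun ω => (X i ω, Y i ω)) (fun ω => (X 0 ω, Y 0 ω)) ℙ ℙ

/-- `G` is a distribution function. -/
def IsCDF (G : ℝ → ℝ) : Prop :=
  Monotone G ∧ (∀ y, ContinuousWithinAt G (Ici y) y) ∧
    Tendsto G atBot (𝓝 0) ∧ Tendsto G atTop (𝓝 1)

/-- A distribution function is non-degenerate if it is not the distribution function of a
point mass. -/
def NonDegenerate (G : ℝ → ℝ) : Prop :=
  ∃ y, 0 < G y ∧ G y < 1

/-- Convergence in distribution of real random variables towards the distribution
function `G`: convergence of the distribution functions at every continuity point of `G`. -/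
def TendstoInDist (W : ℕ → Ω → ℝ) (G : ℝ → ℝ) : Prop :=
  ∀ y : ℝ, ContinuousAt G y →
    Tendsto (fun n => (ℙ {ω | W n ω ≤ y}).toReal) atTop (𝓝 (G y))

/-- The extreme-value Weibull distribution function `Ψ_ρ(y) = exp(-(-y)^ρ)` for `y ≤ 0`,
`= 1` for `y > 0`. -/
def PsiEV (ρ y : ℝ) : ℝ :=
  if y ≤ 0 then Real.exp (-((-y) ^ ρ)) else 1

/-- The `Weibull(1,ρ)` distribution function: `W^ρ` is exponential with parameter 1. -/
def weibullCDF (ρ y : ℝ) : ℝ :=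
  if 0 ≤ y then 1 - Real.exp (-(y ^ ρ)) else 0

/-- The distribution function of a centered normal distribution with variance `v`. -/
def normalCDF (v y : ℝ) : ℝ :=
  ((gaussianReal 0 (Real.toNNReal v)) (Iic y)).toReal

/-- Condition (2.2): `1 - F(φ(x) - 1/t | x)` is regularly varying with exponent `-ρ`. -/
def Cond22 (X : ℕ → Ω → (Fin p → ℝ)) (Y : ℕ → Ω → ℝ) (x : Fin p → ℝ) (ρ : ℝ) : Prop :=
  ∀ z > 0, Tendsto
    (fun t => (1 - condF X Y x (phi X Y x - 1 / (t * z))) /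
      (1 - condF X Y x (phi X Y x - 1 / t)))
    atTop (𝓝 (z ^ (-ρ)))

/-- Regular variation at infinity with index `τ`. -/
def RegVary (h : ℝ → ℝ) (τ : ℝ) : Prop :=
  ∀ z > 0, Tendsto (fun t => h (t * z) / h t) atTop (𝓝 (z ^ τ))

/-- Generalized inverse of a function `g : ℝ → ℝ`. -/
def genInv (g : ℝ → ℝ) (y : ℝ) : ℝ :=
  sInf {t : ℝ | y ≤ g t}

/-- Exact-power tail condition:
`F_X(x)[1 - F(y|x)] = ℓ (φ(x) - y)^ρ` for all `y < φ(x)` close enough to `φ(x)`. -/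
def ExactPowerTail (X : ℕ → Ω → (Fin p → ℝ)) (Y : ℕ → Ω → ℝ) (x : Fin p → ℝ)
    (ℓ ρ : ℝ) : Prop :=
  ∃ y₀ < phi X Y x, ∀ y, y₀ ≤ y → y < phi X Y x →
    margF X x * (1 - condF X Y x y) = ℓ * (phi X Y x - y) ^ ρ

/-- The function `U(t) = φ_{1 - 1/(t F_X(x))}(x)`. -/
def Ufun (X : ℕ → Ω → (Fin p → ℝ)) (Y : ℕ → Ω → ℝ) (x : Fin p → ℝ) (t : ℝ) : ℝ :=
  condQ X Y (1 - 1 / (t * margF X x)) x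

/-- The Pickands-type estimator `ρ̂_x` with threshold `k`. -/
def pickands (X : ℕ → Ω → (Fin p → ℝ)) (Y : ℕ → Ω → ℝ) (n k : ℕ) (x : Fin p → ℝ)
    (ω : Ω) : ℝ :=
  Real.log 2 / Real.log
    ((empCondQ X Y n (1 - (2 * (k : ℝ) - 1) / ((n : ℝ) * empMargF X n x ω)) x ω -
        empCondQ X Y n (1 - (4 * (k : ℝ) - 1) / ((n : ℝ) * empMargF X n x ω)) x ω) /
      (empCondQ X Y n (1 - ((k : ℝ) - 1) / ((n : ℝ) * empMargF X n x ω)) x ω -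
        empCondQ X Y n (1 - (2 * (k : ℝ) - 1) / ((n : ℝ) * empMargF X n x ω)) x ω))

/-- The statistic `M^{(j)}_n`. -/
def Mstat (X : ℕ → Ω → (Fin p → ℝ)) (Y : ℕ → Ω → ℝ) (n k j : ℕ) (x : Fin p → ℝ)
    (ω : Ω) : ℝ :=
  (∑ i ∈ Finset.range k,
      (Real.log (empCondQ X Y n (1 - (i : ℝ) / ((n : ℝ) * empMargF X n x ω)) x ω) -
        Real.log (empCondQ X Y n (1 - (k : ℝ) / ((n : ℝ) * empMargF X n x ω)) x ω)) ^ j) / k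

/-- The moment-type estimator `ρ̃_x` with threshold `k`. -/
def momentEst (X : ℕ → Ω → (Fin p → ℝ)) (Y : ℕ → Ω → ℝ) (n k : ℕ) (x : Fin p → ℝ)
    (ω : Ω) : ℝ :=
  -(Mstat X Y n k 1 x ω + 1 -
      (1 / 2) * (1 - (Mstat X Y n k 1 x ω) ^ 2 / Mstat X Y n k 2 x ω)⁻¹)⁻¹

end FrontierEV

namespace FrontierEV

/-!
Let `c < φ(x)` be close to the frontier. The event `φ̂₁(x) ≥ c` occurs exactly when some
observation falls in the box `{X ≤ x, Y ≥ c}`, whose probability is `ℓ (φ(x) - c)^ρ` by the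
exact-power tail condition (for `Y ≥ c` rather than `Y > c`, by continuity of the tail).
By independence, `P(φ̂₁(x) ≥ c) = 1 - (1 - ℓ (φ(x) - c)^ρ)^n`. Choosing
`c = φ(x) - y (nℓ)^{-1/ρ}` turns this into `1 - (1 - y^ρ / n)^n → 1 - exp(-y^ρ)`.
-/

section Generic

variable {α β : Type*} [MeasurableSpace α] [MeasurableSpace β]

theorem tendsto_measure_inter_sub_lt {μ : Measure α} [IsFiniteMeasure μ] {s : Set α}
    (hs : MeasurableSet s) {g : α → ℝ} (hg : Measurable g) (c : ℝ) :
    Tendsto (fun r => μ (s ∩ {ω | c - r < g ω})) (𝓝[>] 0) (𝓝 (μ (s ∩ {ω | c ≤ g ω}))) := by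
  have hInter : ⋂ r > (0 : ℝ), s ∩ {ω | c - r < g ω} = s ∩ {ω | c ≤ g ω} := by
    ext ω
    simp only [mem_iInter, mem_inter_iff, mem_ofPred_eq]
    refine ⟨fun h => ⟨(h 1 one_pos).1, le_of_forall_pos_lt_add fun r hr => ?_⟩,
      fun h r hr => ⟨h.1, by linarith [h.2]⟩⟩
    linarith [(h r hr).2]
  rw [← hInter]
  refine tendsto_measure_biInter_gt (fun r _ => (hs.inter ?_).nullMeasurableSet)
    (fun r r' _ hrr' => inter_subset_inter_right _ fun ω hω => ?_) ⟨1, one_pos, measure_ne_top _ _⟩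
  · exact measurableSet_lt measurable_const hg
  · simp only [mem_ofPred_eq] at hω ⊢
    linarith

theorem measureReal_exists_mem_eq_one_sub_pow {μ : Measure α} [IsProbabilityMeasure μ]
    {Z : ℕ → α → β} (hZ : ∀ i, Measurable (Z i)) (hind : iIndepFun Z μ)
    (hid : ∀ i, IdentDistrib (Z i) (Z 0) μ μ) {S : Set β} (hS : MeasurableSet S) (n : ℕ) :
    μ.real {ω | ∃ i < n, Z i ω ∈ S} = 1 - (1 - μ.real (Z 0 ⁻¹' S)) ^ n := by
  have hcompl : {ω | ∃ i < n, Z i ω ∈ S}ᶜ = ⋂ i ∈ Finset.range n, Z i ⁻¹' Sᶜ := by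
    ext ω
    simp
  have hnone : μ (⋂ i ∈ Finset.range n, Z i ⁻¹' Sᶜ) = μ (Z 0 ⁻¹' Sᶜ) ^ n := by
    rw [hind.measure_inter_preimage_eq_mul _ fun i _ => hS.compl,
      Finset.prod_congr rfl fun i _ => (hid i).measure_mem_eq hS.compl, Finset.prod_const,
      Finset.card_range]
  have hmeas : MeasurableSet {ω | ∃ i < n, Z i ω ∈ S} := by
    rw [← compl_compl {ω | ∃ i < n, Z i ω ∈ S}, hcompl]
    exact (Finset.measurableSet_biInter _ fun i _ => hZ i hS.compl).compl
  have h := probReal_compl_eq_one_sub (μ := μ) hmeas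
  rw [hcompl, measureReal_def, hnone, ENNReal.toReal_pow, ← measureReal_def, preimage_compl,
    probReal_compl_eq_one_sub (hZ 0 hS)] at h
  linarith

theorem tendsto_one_sub_one_sub_div_pow (t : ℝ) :
    Tendsto (fun n : ℕ => 1 - (1 - t / n) ^ n) atTop (𝓝 (1 - Real.exp (-t))) := by
  refine (tendsto_const_nhds.sub (Real.tendsto_one_add_div_pow_exp (-t))).congr fun n => ?_
  ring

end Generic

section FDH

variable {Ω : Type*} {p : ℕ} {X : ℕ → Ω → (Fin p → ℝ)} {Y : ℕ → Ω → ℝ} {x : Fin p → ℝ}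

/-- `0 < c` rules out the junk value `fdh = sSup ∅ = 0` when no `X i ≤ x`. -/
theorem le_fdh_iff {n : ℕ} {ω : Ω} {c : ℝ} (hc : 0 < c) :
    c ≤ fdh X Y n x ω ↔ ∃ i < n, X i ω ≤ x ∧ c ≤ Y i ω := by
  rw [fdh]
  set S := {y : ℝ | ∃ i < n, X i ω ≤ x ∧ Y i ω = y}
  have hfin : S.Finite :=
    ((Set.finite_Iio n).image fun i => Y i ω).subset fun _ ⟨i, hi, _, hy⟩ => ⟨i, hi, hy⟩
  constructor
  · intro h
    rcases S.eq_empty_or_nonempty with hS | hS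
    · rw [hS, Real.sSup_empty] at h
      linarith
    · obtain ⟨i, hi, hxi, hyi⟩ := hS.csSup_mem hfin
      exact ⟨i, hi, hxi, hyi ▸ h⟩
  · rintro ⟨i, hi, hxi, hyi⟩
    exact hyi.trans (le_csSup hfin.bddAbove ⟨i, hi, hxi, rfl⟩)

end FDH

variable {Ω : Type*} [MeasureSpace Ω] {p : ℕ}

section Tail

def ExactPowerTailFrom (X : ℕ → Ω → (Fin p → ℝ)) (Y : ℕ → Ω → ℝ) (x : Fin p → ℝ)
    (ℓ ρ y₀ : ℝ) : Prop :=
  ∀ y, y₀ ≤ y → y < phi X Y x → margF X x * (1 - condF X Y x y) = ℓ * (phi X Y x - y) ^ ρ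

variable {X : ℕ → Ω → (Fin p → ℝ)} {Y : ℕ → Ω → ℝ} {x : Fin p → ℝ} {ℓ ρ y₀ : ℝ}

theorem phi_pos_of_tail (hpos : ∀ᵐ ω ∂ℙ, (∀ i, 0 ≤ X 0 ω i) ∧ 0 ≤ Y 0 ω)
    (hℓ : 0 < ℓ) (hρ : 0 < ρ) (hy₀ : y₀ < phi X Y x) (ht : ExactPowerTailFrom X Y x ℓ ρ y₀) :
    0 < phi X Y x := by
  by_contra! hφ
  set φ := phi X Y x
  have hjoint : ∀ c < φ, jointF X Y x c = 0 := by
    intro c hc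
    have hneg : {ω | X 0 ω ≤ x ∧ Y 0 ω ≤ c} ⊆ {ω | ¬((∀ i, 0 ≤ X 0 ω i) ∧ 0 ≤ Y 0 ω)} :=
      fun ω hω hnn => by linarith [hω.2, hnn.2]
    simp [jointF, measure_mono_null hneg (by simpa [ae_iff] using hpos)]
  -- the tail would be constant, equal to `F_X(x)`, on `[y₀, φ)`, but `ℓ (φ - y)^ρ` is not
  set c₁ := max y₀ (φ - 1)
  have hc₁ : c₁ < φ := max_lt hy₀ (by linarith)
  have e₁ := ht c₁ (le_max_left _ _) hc₁
  have e₂ := ht ((c₁ + φ) / 2) (by linarith [le_max_left y₀ (φ - 1)]) (by linarith)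
  rw [condF, hjoint _ hc₁, zero_div, sub_zero, mul_one] at e₁
  rw [condF, hjoint _ (by linarith), zero_div, sub_zero, mul_one] at e₂
  have hlt : (φ - (c₁ + φ) / 2) ^ ρ < (φ - c₁) ^ ρ :=
    Real.rpow_lt_rpow (by linarith) (by linarith) hρ
  nlinarith

variable [IsProbabilityMeasure (ℙ : Measure Ω)]

theorem measure_lt_eq_of_tail (hm : Measurable fun ω => (X 0 ω, Y 0 ω)) (hx : 0 < margF X x)
    (ht : ExactPowerTailFrom X Y x ℓ ρ y₀)
    {c : ℝ} (hc₀ : y₀ ≤ c) (hcφ : c < phi X Y x) :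
    ℙ {ω | X 0 ω ≤ x ∧ c < Y 0 ω} = ENNReal.ofReal (ℓ * (phi X Y x - c) ^ ρ) := by
  have hdiff : {ω | X 0 ω ≤ x ∧ c < Y 0 ω} =
      {ω | X 0 ω ≤ x} \ {ω | X 0 ω ≤ x ∧ Y 0 ω ≤ c} := by
    ext ω
    simp only [mem_ofPred_eq, Set.mem_sdiff, not_and, not_le]
    tauto
  have hreal : (ℙ : Measure Ω).real {ω | X 0 ω ≤ x ∧ c < Y 0 ω} = margF X x - jointF X Y x c := by
    have hjoint : MeasurableSet {ω | X 0 ω ≤ x ∧ Y 0 ω ≤ c} :=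
      hm (measurableSet_Iic.prod measurableSet_Iic)
    have hsub : {ω | X 0 ω ≤ x ∧ Y 0 ω ≤ c} ⊆ {ω | X 0 ω ≤ x} := fun _ h => h.1
    rw [hdiff, measureReal_sdiff hsub hjoint]
    rfl
  rw [← ENNReal.ofReal_toReal (measure_ne_top _ _), ← measureReal_def, hreal, ← ht c hc₀ hcφ,
    condF, mul_sub, mul_one, mul_div_cancel₀ _ hx.ne']

theorem measure_le_eq_of_tail (hm : Measurable fun ω => (X 0 ω, Y 0 ω)) (hx : 0 < margF X x)
    (hρ : 0 ≤ ρ) (ht : ExactPowerTailFrom X Y x ℓ ρ y₀)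
    {c : ℝ} (hc₀ : y₀ < c) (hcφ : c ≤ phi X Y x) :
    ℙ {ω | X 0 ω ≤ x ∧ c ≤ Y 0 ω} = ENNReal.ofReal (ℓ * (phi X Y x - c) ^ ρ) := by
  have hX : MeasurableSet {ω | X 0 ω ≤ x} := measurable_fst.comp hm measurableSet_Iic
  have hlim := tendsto_measure_inter_sub_lt (μ := ℙ) hX (measurable_snd.comp hm) c
  have hnear : ∀ᶠ r in 𝓝[>] (0 : ℝ), ℙ ({ω | X 0 ω ≤ x} ∩ {ω | c - r < Y 0 ω}) =
      ENNReal.ofReal (ℓ * (phi X Y x - (c - r)) ^ ρ) := by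
    filter_upwards [Ioo_mem_nhdsGT (sub_pos.mpr hc₀)] with r ⟨hr0, hr⟩
    exact measure_lt_eq_of_tail hm hx ht (by linarith) (by linarith)
  have hcont : ContinuousAt (fun r => ENNReal.ofReal (ℓ * (phi X Y x - (c - r)) ^ ρ)) 0 := by
    refine ENNReal.continuous_ofReal.continuousAt.comp (continuousAt_const.mul ?_)
    exact (Real.continuousAt_rpow_const _ _ (Or.inr hρ)).comp (by fun_prop)
  have hlim' := (hcont.tendsto.mono_left nhdsWithin_le_nhds).congr' (hnear.mono fun _ h => h.symm)
  rw [sub_zero] at hlim'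
  exact tendsto_nhds_unique hlim hlim'

end Tail

section Estimator

variable [IsProbabilityMeasure (ℙ : Measure Ω)] {X : ℕ → Ω → (Fin p → ℝ)} {Y : ℕ → Ω → ℝ}
  {x : Fin p → ℝ} {ℓ ρ y₀ : ℝ}

theorem measureReal_le_fdh (hiid : IID X Y) (hx : 0 < margF X x) (hℓ : 0 ≤ ℓ) (hρ : 0 ≤ ρ)
    (ht : ExactPowerTailFrom X Y x ℓ ρ y₀)
    {c : ℝ} (hc : 0 < c) (hc₀ : y₀ < c) (hcφ : c ≤ phi X Y x) (n : ℕ) :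
    (ℙ : Measure Ω).real {ω | c ≤ fdh X Y n x ω} = 1 - (1 - ℓ * (phi X Y x - c) ^ ρ) ^ n := by
  obtain ⟨hm, hind, hid⟩ := hiid
  have hset : {ω | c ≤ fdh X Y n x ω} = {ω | ∃ i < n, (X i ω, Y i ω) ∈ Iic x ×ˢ Ici c} := by
    ext ω
    simp [le_fdh_iff hc]
  have hbox : (ℙ : Measure Ω).real ((fun ω => (X 0 ω, Y 0 ω)) ⁻¹' Iic x ×ˢ Ici c) =
      ℓ * (phi X Y x - c) ^ ρ := by
    change (ℙ {ω | X 0 ω ≤ x ∧ c ≤ Y 0 ω}).toReal = _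
    rw [measure_le_eq_of_tail (hm 0) hx hρ ht hc₀ hcφ, ENNReal.toReal_ofReal (by positivity)]
  rw [hset, measureReal_exists_mem_eq_one_sub_pow hm hind hid
    (measurableSet_Iic.prod measurableSet_Ici), hbox]

theorem eventually_measureReal_scaled_gap_le (hiid : IID X Y) (hx : 0 < margF X x)
    (hℓ : 0 < ℓ) (hρ : 0 < ρ) (hφ : 0 < phi X Y x) (hy₀ : y₀ < phi X Y x)
    (ht : ExactPowerTailFrom X Y x ℓ ρ y₀) {y : ℝ} (hy : 0 ≤ y) :
    ∀ᶠ n : ℕ in atTop, (ℙ : Measure Ω).real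
      {ω | ((n : ℝ) * ℓ) ^ (1 / ρ) * (phi X Y x - fdh X Y n x ω) ≤ y} =
        1 - (1 - y ^ ρ / n) ^ n := by
  have hscale : Tendsto (fun n : ℕ => ((n : ℝ) * ℓ) ^ (1 / ρ)) atTop atTop :=
    (tendsto_rpow_atTop (by positivity)).comp (tendsto_natCast_atTop_atTop.atTop_mul_const hℓ)
  have hgap : Tendsto (fun n : ℕ => y / ((n : ℝ) * ℓ) ^ (1 / ρ)) atTop (𝓝 0) :=
    tendsto_const_nhds.div_atTop hscale
  filter_upwards [eventually_ge_atTop 1,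
    hgap.eventually (gt_mem_nhds (sub_pos.mpr (max_lt hy₀ hφ)))] with n hn hsmall
  set a := ((n : ℝ) * ℓ) ^ (1 / ρ)
  have hn' : (1 : ℝ) ≤ n := by exact_mod_cast hn
  have ha : 0 < a := by positivity
  have hevent : {ω | a * (phi X Y x - fdh X Y n x ω) ≤ y} =
      {ω | phi X Y x - y / a ≤ fdh X Y n x ω} := by
    ext ω
    simp only [mem_ofPred_eq]
    rw [sub_le_comm, le_div_iff₀' ha]
  have hpow : ℓ * (y / a) ^ ρ = y ^ ρ / n := by
    have haρ : a ^ ρ = n * ℓ := by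
      rw [← Real.rpow_mul (by positivity), one_div_mul_cancel hρ.ne', Real.rpow_one]
    rw [Real.div_rpow hy ha.le, haρ]
    field_simp
  have hc₀ : max y₀ 0 < phi X Y x - y / a := by linarith
  rw [hevent, measureReal_le_fdh hiid hx hℓ.le hρ.le ht (lt_of_le_of_lt (le_max_right _ _) hc₀)
    (lt_of_le_of_lt (le_max_left _ _) hc₀) (by linarith [div_nonneg hy ha.le]) n,
    sub_sub_cancel, hpow]

end Estimator

theorem statement3_general
    [IsProbabilityMeasure (ℙ : Measure Ω)]
    (X : ℕ → Ω → (Fin p → ℝ)) (Y : ℕ → Ω → ℝ) (hiid : IID X Y)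
    (hpos : ∀ᵐ ω ∂ℙ, (∀ i, 0 ≤ X 0 ω i) ∧ 0 ≤ Y 0 ω)
    (x : Fin p → ℝ) (hx : 0 < margF X x)
    (ℓ ρ : ℝ) (hℓ : 0 < ℓ) (hρ : 0 < ρ) (htail : ExactPowerTail X Y x ℓ ρ) :
    TendstoInDist (fun n ω => ((n : ℝ) * ℓ) ^ (1 / ρ) * (phi X Y x - fdh X Y n x ω))
      (weibullCDF ρ) := by
  obtain ⟨y₀, hy₀, ht⟩ := htail
  have hφ := phi_pos_of_tail hpos hℓ hρ hy₀ ht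
  have hlaw := fun y (hy : 0 ≤ y) =>
    eventually_measureReal_scaled_gap_le hiid hx hℓ hρ hφ hy₀ ht hy
  intro y _
  rcases le_or_gt 0 y with hy | hy
  · rw [weibullCDF, if_pos hy]
    exact (tendsto_one_sub_one_sub_div_pow _).congr' ((hlaw y hy).mono fun n h => h.symm)
  · rw [weibullCDF, if_neg hy.not_ge]
    refine tendsto_const_nhds.congr' ?_
    filter_upwards [hlaw 0 le_rfl] with n hn
    rw [Real.zero_rpow hρ.ne', zero_div, sub_zero, one_pow, sub_self] at hn
    have hmono : (ℙ : Measure Ω).real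
        {ω | ((n : ℝ) * ℓ) ^ (1 / ρ) * (phi X Y x - fdh X Y n x ω) ≤ y} ≤ 0 :=
      (measureReal_mono fun _ h => le_trans (b := y) h hy.le).trans hn.le
    exact (le_antisymm hmono measureReal_nonneg).symm

/-- Corollary 2.1: under the exact-power tail condition,
`(nℓ_x)^{1/ρ_x} (φ(x) - φ̂_1(x))` converges in distribution to `Weibull(1, ρ_x)`. -/
theorem statement3
    [IsProbabilityMeasure (ℙ : Measure Ω)]
    (X : ℕ → Ω → (Fin p → ℝ)) (Y : ℕ → Ω → ℝ) (hiid : IID X Y)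
    (hpos : ∀ᵐ ω ∂ℙ, (∀ i, 0 ≤ X 0 ω i) ∧ 0 ≤ Y 0 ω)
    (x : Fin p → ℝ) (hxpos : ∀ i, 0 ≤ x i) (hx : 0 < margF X x)
    (hphi : BddAbove {y : ℝ | 0 ≤ y ∧ condF X Y x y < 1})
    (ℓ ρ : ℝ) (hℓ : 0 < ℓ) (hρ : 0 < ρ) (htail : ExactPowerTail X Y x ℓ ρ) :
    TendstoInDist (fun n ω => ((n : ℝ) * ℓ) ^ (1 / ρ) * (phi X Y x - fdh X Y n x ω))
      (weibullCDF ρ) :=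
  statement3_general X Y hiid hpos x hx ℓ ρ hℓ hρ htail

end FrontierEV
end
end

section
/- If there exist norming constants b_n > 0 and a non-degenerate distribution function G_x such that b_n^{-1}(φ̂_1(x) − φ(x)) converges in distribution to G_x, then for any fixed integer k ≥ 0, b_n^{-1}(φ̂_{1−k/(nF̂_X(x))}(x) − φ(x)) converges in distribution, as n → ∞, to the distribution function H_x(y) = G_x(y) Σ_{i=0}^k (−log G_x(y))^i / i!. -/
open MeasureTheory ProbabilityTheory Filter Set Asymptotics Topology

noncomputable section

/-!
Both estimators are monotone functions of the number `N_n(u)` of observations with `X_i ≤ x` and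
`Y_i > u`: `φ̂₁(x) ≤ u` iff `N_n(u) = 0`, and `φ̂_{1-k/(n F̂_X(x))}(x) ≤ u` iff `N_n(u) ≤ k`.
By independence `N_n(u)` is binomial with parameters `n` and `q(u) = ℙ(X ≤ x, Y > u)`.
At `u = φ(x) + b_n y` the hypothesis reads `(1 - q_n)^n → G(y)`. If `G(y) > 0` this forces
`n q_n → -log G(y)`, and the Poisson limit theorem gives `ℙ(N_n ≤ k) → H(y)`; if `G(y) = 0`,
every `ℙ(N_n = j)` tends to `0 = H(y)`. Finally `H(y) = h(G(y))` with
`h(g) = g ∑_{i ≤ k} (-log g)^i / i!` strictly increasing on `[0, 1]`, so every continuity point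
of `H` is one of `G`.
-/

namespace FrontierEV

def binomialCDF (n k : ℕ) (q : ℝ) : ℝ :=
  ∑ j ∈ Finset.range (k + 1), (n.choose j : ℝ) * q ^ j * (1 - q) ^ (n - j)

/-- `ℙ(N ≤ k)` for `N` Poisson distributed with `ℙ(N = 0) = g`, i.e. with mean `-log g`. -/
def poissonCDF (k : ℕ) (g : ℝ) : ℝ :=
  g * ∑ i ∈ Finset.range (k + 1), (-Real.log g) ^ i / (i.factorial : ℝ)

lemma binomialCDF_zero (n : ℕ) (q : ℝ) : binomialCDF n 0 q = (1 - q) ^ n := by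
  simp [binomialCDF]

lemma binomialCDF_one {n k : ℕ} (h : k < n) : binomialCDF n k 1 = 0 :=
  Finset.sum_eq_zero fun j hj => by
    rw [sub_self, zero_pow (by grind), mul_zero]

lemma tendsto_natCast_mul_of_tendsto_one_sub_pow {q : ℕ → ℝ} (hq0 : ∀ n, 0 ≤ q n)
    (hq1 : ∀ n, q n ≤ 1) {g : ℝ} (hg : 0 < g) (h : Tendsto (fun n => (1 - q n) ^ n) atTop (𝓝 g)) :
    Tendsto (fun n : ℕ => n * q n) atTop (𝓝 (-Real.log g)) := by
  have hlog : Tendsto (fun n => -Real.log ((1 - q n) ^ n)) atTop (𝓝 (-Real.log g)) :=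
    ((Real.continuousAt_log hg.ne').tendsto.comp h).neg
  have hpos : ∀ᶠ n in atTop, 0 < 1 - q n := by
    filter_upwards [h.eventually (lt_mem_nhds hg), eventually_ge_atTop 1] with n hn hn1
    by_contra! hq
    rw [show 1 - q n = 0 by linarith [hq1 n], zero_pow (by omega)] at hn
    exact hn.false
  -- squeeze with `q ≤ -log (1 - q) ≤ q / (1 - q)`
  have hupper : ∀ᶠ n in atTop, n * q n ≤ -Real.log ((1 - q n) ^ n) := by
    filter_upwards [hpos] with n hn
    have hlog_le := Real.log_le_sub_one_of_pos hn
    rw [Real.log_pow]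
    nlinarith [(n.cast_nonneg : (0 : ℝ) ≤ n)]
  have hlower : ∀ᶠ n in atTop, -Real.log ((1 - q n) ^ n) * (1 - q n) ≤ n * q n := by
    filter_upwards [hpos] with n hn
    have hle_log := Real.one_sub_inv_le_log_of_pos hn
    have hneg_log : -Real.log (1 - q n) * (1 - q n) ≤ q n := by
      field_simp at hle_log
      nlinarith
    rw [Real.log_pow]
    nlinarith [(n.cast_nonneg : (0 : ℝ) ≤ n)]
  have hq : Tendsto q atTop (𝓝 0) := by
    refine tendsto_of_tendsto_of_tendsto_of_le_of_le' tendsto_const_nhds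
      (hlog.div_atTop tendsto_natCast_atTop_atTop) (Eventually.of_forall hq0) ?_
    filter_upwards [hupper, eventually_gt_atTop 0] with n hn hn0
    rw [le_div_iff₀ (by exact_mod_cast hn0)]
    linarith
  refine tendsto_of_tendsto_of_tendsto_of_le_of_le' ?_ hlog hlower hupper
  simpa using hlog.mul ((tendsto_const_nhds (x := (1 : ℝ))).sub hq)

lemma sq_choose_mul_pow_le {n j : ℕ} (hn : 4 * j ≤ n) {q : ℝ} (hq0 : 0 ≤ q) (hq1 : q ≤ 1) :
    ((n.choose j : ℝ) * q ^ j * (1 - q) ^ (n - j)) ^ 2 ≤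
      4 ^ j * (2 * j).factorial * (1 - q) ^ n := by
  set t : ℝ := n * q
  have ht : 0 ≤ t := by positivity
  have h1q : 0 ≤ 1 - q := by linarith
  have hchoose : (n.choose j : ℝ) * q ^ j ≤ t ^ j := by
    rw [mul_pow]
    gcongr
    exact_mod_cast Nat.choose_le_pow n j
  have hdecay : (1 - q) ^ (n - 2 * j) ≤ Real.exp (-(t / 2)) := by
    calc (1 - q) ^ (n - 2 * j) ≤ Real.exp (-q) ^ (n - 2 * j) := by
          gcongr; exact Real.one_sub_le_exp_neg q
      _ = Real.exp (-(q * (n - 2 * j : ℕ))) := by rw [← Real.exp_nat_mul]; ring_nf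
      _ ≤ Real.exp (-(t / 2)) := by
          gcongr
          rw [Nat.cast_sub (by omega)]
          have : (4 * j : ℝ) ≤ n := by exact_mod_cast hn
          push_cast
          nlinarith
  have hpoly : t ^ (2 * j) * Real.exp (-(t / 2)) ≤ 4 ^ j * (2 * j).factorial := by
    have hfact := Real.pow_div_factorial_le_exp (t / 2) (by positivity) (2 * j)
    rw [div_le_iff₀ (by positivity)] at hfact
    calc t ^ (2 * j) * Real.exp (-(t / 2))
        = 4 ^ j * ((t / 2) ^ (2 * j) * Real.exp (-(t / 2))) := by
          rw [div_pow, pow_mul 2]; field_simp; norm_num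
      _ ≤ 4 ^ j * (Real.exp (t / 2) * (2 * j).factorial * Real.exp (-(t / 2))) := by gcongr
      _ = 4 ^ j * (2 * j).factorial := by
          rw [mul_comm (Real.exp _), mul_assoc, ← Real.exp_add]; simp
  calc ((n.choose j : ℝ) * q ^ j * (1 - q) ^ (n - j)) ^ 2
      ≤ (t ^ j * (1 - q) ^ (n - j)) ^ 2 := by gcongr
    _ = t ^ (2 * j) * (1 - q) ^ (n - 2 * j) * (1 - q) ^ n := by
        rw [mul_pow, ← pow_mul, ← pow_mul, mul_assoc, ← pow_add]
        congr 2 <;> omega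
    _ ≤ t ^ (2 * j) * Real.exp (-(t / 2)) * (1 - q) ^ n := by gcongr
    _ ≤ 4 ^ j * (2 * j).factorial * (1 - q) ^ n := by gcongr

lemma tendsto_choose_mul_pow_of_tendsto_one_sub_pow_zero {q : ℕ → ℝ} (hq0 : ∀ n, 0 ≤ q n)
    (hq1 : ∀ n, q n ≤ 1) (h : Tendsto (fun n => (1 - q n) ^ n) atTop (𝓝 0)) (j : ℕ) :
    Tendsto (fun n => (n.choose j : ℝ) * q n ^ j * (1 - q n) ^ (n - j)) atTop (𝓝 0) := by
  have hnonneg : ∀ n, 0 ≤ (n.choose j : ℝ) * q n ^ j * (1 - q n) ^ (n - j) := fun n =>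
    mul_nonneg (mul_nonneg (Nat.cast_nonneg _) (pow_nonneg (hq0 n) j))
      (pow_nonneg (sub_nonneg.2 (hq1 n)) _)
  have hsq : Tendsto (fun n => ((n.choose j : ℝ) * q n ^ j * (1 - q n) ^ (n - j)) ^ 2) atTop
      (𝓝 0) := by
    refine squeeze_zero' (Eventually.of_forall fun n => sq_nonneg _)
      ?_ (by simpa using h.const_mul (4 ^ j * (2 * j).factorial : ℝ))
    filter_upwards [eventually_ge_atTop (4 * j)] with n hn
    exact sq_choose_mul_pow_le hn (hq0 n) (hq1 n)
  have := (Real.continuous_sqrt.tendsto 0).comp hsq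
  simpa only [Function.comp_def, Real.sqrt_sq (hnonneg _), Real.sqrt_zero] using this

theorem tendsto_binomialCDF {q : ℕ → ℝ} (hq0 : ∀ n, 0 ≤ q n) (hq1 : ∀ n, q n ≤ 1) {g : ℝ}
    (h : Tendsto (fun n => (1 - q n) ^ n) atTop (𝓝 g)) (k : ℕ) :
    Tendsto (fun n => binomialCDF n k (q n)) atTop (𝓝 (poissonCDF k g)) := by
  have hg : 0 ≤ g := ge_of_tendsto' h fun n => pow_nonneg (by linarith [hq1 n]) n
  rcases hg.eq_or_lt with rfl | hg
  · simpa [binomialCDF, poissonCDF] using tendsto_finsetSum (Finset.range (k + 1)) fun j _ =>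
      tendsto_choose_mul_pow_of_tendsto_one_sub_pow_zero hq0 hq1 h j
  · rw [poissonCDF, Finset.mul_sum]
    refine tendsto_finsetSum _ fun j _ => ?_
    have := tendsto_choose_mul_pow_of_tendsto_mul_atTop j
      (tendsto_natCast_mul_of_tendsto_one_sub_pow hq0 hq1 hg h)
    rwa [neg_neg, Real.exp_log hg, mul_div_assoc] at this

lemma hasDerivAt_poissonCDF (k : ℕ) {g : ℝ} (hg : 0 < g) :
    HasDerivAt (poissonCDF k) ((-Real.log g) ^ k / k.factorial) g := by
  induction k with
  | zero =>
    have : poissonCDF 0 = id := by ext; simp [poissonCDF]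
    simpa [this] using hasDerivAt_id g
  | succ k ih =>
    have hsucc : poissonCDF (k + 1) =
        fun g => poissonCDF k g + g * ((-Real.log g) ^ (k + 1) / (k + 1).factorial) := by
      ext g
      simp only [poissonCDF, Finset.sum_range_succ _ (k + 1)]
      ring
    rw [hsucc]
    refine (ih.add ((hasDerivAt_id' g).mul
      (((Real.hasDerivAt_log hg.ne').neg.pow (k + 1)).div_const _))).congr_deriv ?_
    simp only [Pi.neg_apply, Pi.pow_apply]
    field_simp
    push_cast [Nat.factorial_succ]
    ring

lemma strictMonoOn_poissonCDF (k : ℕ) : StrictMonoOn (poissonCDF k) (Icc 0 1) := by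
  have hIoc : StrictMonoOn (poissonCDF k) (Ioc 0 1) := by
    refine strictMonoOn_of_deriv_pos (convex_Ioc 0 1)
      (fun g hg => (hasDerivAt_poissonCDF k hg.1).continuousAt.continuousWithinAt) ?_
    intro g hg
    rw [interior_Ioc] at hg
    rw [(hasDerivAt_poissonCDF k hg.1).deriv]
    have hL : 0 < -Real.log g := neg_pos.2 (Real.log_neg hg.1 hg.2)
    positivity
  have hpos : ∀ g ∈ Ioc (0 : ℝ) 1, 0 < poissonCDF k g := by
    rintro g ⟨hg0, hg1⟩
    have hL : 0 ≤ -Real.log g := neg_nonneg.2 (Real.log_nonpos hg0.le hg1)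
    exact mul_pos hg0 (Finset.sum_pos' (fun i _ => by positivity) ⟨0, by simp, by simp⟩)
  rintro a ⟨ha0, ha1⟩ b ⟨hb0, hb1⟩ hab
  rcases ha0.eq_or_lt with rfl | ha0
  · simpa [poissonCDF] using hpos b ⟨hab, hb1⟩
  · exact hIoc ⟨ha0, ha1⟩ ⟨ha0.trans hab, hb1⟩ hab

lemma _root_.Monotone.continuousAt_of_strictMonoOn_comp {G h : ℝ → ℝ} {s : Set ℝ}
    (hG : Monotone G) (hs : IsClosed s) (hGs : ∀ t, G t ∈ s) (hh : StrictMonoOn h s) {y : ℝ}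
    (hright : ContinuousWithinAt G (Ici y) y) (hy : ContinuousAt (h ∘ G) y) :
    ContinuousAt G y := by
  set L := sSup (G '' Iio y)
  have hL : Tendsto G (𝓝[<] y) (𝓝 L) := hG.tendsto_nhdsLT y
  have hLs : L ∈ s := hs.mem_of_tendsto hL (Eventually.of_forall hGs)
  have hLy : L ≤ G y :=
    le_of_tendsto hL (eventually_nhdsWithin_of_forall (s := Iio y) fun t ht => hG ht.le)
  have hGL : ∀ t < y, G t ≤ L := fun t ht =>
    le_csSup (hG.map_bddAbove bddAbove_Iio) (mem_image_of_mem G ht)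
  have hhLy : h (G y) ≤ h L := le_of_tendsto (hy.tendsto.mono_left nhdsWithin_le_nhds)
    (eventually_nhdsWithin_of_forall (s := Iio y) fun t ht => hh.monotoneOn (hGs t) hLs (hGL t ht))
  have hLeq : L = G y := hLy.antisymm (not_lt.1 fun hlt => (hh hLs (hGs y) hlt).not_ge hhLy)
  rw [continuousAt_iff_continuous_left_right, ← continuousWithinAt_Iio_iff_Iic]
  exact ⟨by rwa [ContinuousWithinAt, ← hLeq], hright⟩

lemma sInf_le_iff_card_filter_lt_le {ι : Type*} (T : Finset ι) (f : ι → ℝ) (k : ℕ) {u : ℝ}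
    (hu : 0 ≤ u) :
    sInf {y : ℝ | 0 ≤ y ∧ (T.filter fun i => y < f i).card ≤ k} ≤ u ↔
      (T.filter fun i => u < f i).card ≤ k := by
  refine ⟨fun h => ?_, fun h => csInf_le ⟨0, fun y hy => hy.1⟩ ⟨hu, h⟩⟩
  by_contra! hk
  set F := T.filter fun i => u < f i
  have hF : F.Nonempty := Finset.card_pos.1 (by omega)
  have hT : T.Nonempty := hF.mono (Finset.filter_subset _ _)
  have hne : {y : ℝ | 0 ≤ y ∧ (T.filter fun i => y < f i).card ≤ k}.Nonempty := by
    refine ⟨max u (T.sup' hT f), hu.trans (le_max_left _ _), ?_⟩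
    rw [Finset.filter_false_of_mem fun i hi => not_lt.2 ((T.le_sup' f hi).trans (le_max_right _ _))]
    simp
  have hmin : F.inf' hF f ≤ sInf {y : ℝ | 0 ≤ y ∧ (T.filter fun i => y < f i).card ≤ k} := by
    refine le_csInf hne fun y ⟨_, hy⟩ => not_lt.1 fun hym => ?_
    have hsub : F ⊆ T.filter fun i => y < f i := fun i hi =>
      Finset.mem_filter.2 ⟨(Finset.mem_filter.1 hi).1, hym.trans_le (F.inf'_le f hi)⟩
    exact (Finset.card_le_card hsub).trans hy |>.not_gt hk
  have hum : u < F.inf' hF f := (Finset.lt_inf'_iff hF).2 fun i hi => (Finset.mem_filter.1 hi).2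
  linarith

section Estimators

variable {Ω : Type*} {p : ℕ} (X : ℕ → Ω → (Fin p → ℝ)) (Y : ℕ → Ω → ℝ) (x : Fin p → ℝ)

open Classical in
lemma natCast_mul_empMargF (n : ℕ) (ω : Ω) :
    (n : ℝ) * empMargF X n x ω = ((Finset.range n).filter fun i => X i ω ≤ x).card := by
  rw [empMargF, Finset.sum_boole]
  rcases n.eq_zero_or_pos with rfl | hn
  · simp
  · exact mul_div_cancel₀ _ (by positivity)

open Classical in
lemma empCondF_eq (n : ℕ) (y : ℝ) (ω : Ω) :
    empCondF X Y n x y ω = ((Finset.range n).filter fun i => X i ω ≤ x ∧ Y i ω ≤ y).card /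
      ((Finset.range n).filter fun i => X i ω ≤ x).card := by
  rw [empCondF, empJointF, empMargF, Finset.sum_boole, Finset.sum_boole]
  rcases n.eq_zero_or_pos with rfl | hn
  · simp
  · exact div_div_div_cancel_right₀ (by positivity) _ _

open Classical in
lemma one_sub_div_le_empCondF_iff (n k : ℕ) (y : ℝ) (ω : Ω)
    (hN : ((Finset.range n).filter fun i => X i ω ≤ x).Nonempty) :
    1 - k / (n * empMargF X n x ω) ≤ empCondF X Y n x y ω ↔
      ((Finset.range n).filter fun i => X i ω ≤ x ∧ y < Y i ω).card ≤ k := by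
  set T := (Finset.range n).filter fun i => X i ω ≤ x
  have hsplit : ((Finset.range n).filter fun i => X i ω ≤ x ∧ Y i ω ≤ y).card +
      ((Finset.range n).filter fun i => X i ω ≤ x ∧ y < Y i ω).card = T.card := by
    simpa [T, Finset.filter_filter, not_le] using
      Finset.card_filter_add_card_filter_not (s := T) (fun i => Y i ω ≤ y)
  rw [natCast_mul_empMargF X, empCondF_eq X Y, sub_le_iff_le_add, ← add_div,
    le_div_iff₀ (by exact_mod_cast hN.card_pos), one_mul, ← hsplit]
  norm_cast
  omega

open Classical in
lemma empCondQ_le_iff (n k : ℕ) {u : ℝ} (hu : 0 ≤ u) (ω : Ω) :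
    empCondQ X Y n (1 - k / (n * empMargF X n x ω)) x ω ≤ u ↔
      ((Finset.range n).filter fun i => X i ω ≤ x ∧ u < Y i ω).card ≤ k := by
  rcases ((Finset.range n).filter fun i => X i ω ≤ x).eq_empty_or_nonempty with hT | hT
  · have hS : {y : ℝ | 0 ≤ y ∧ 1 - k / (n * empMargF X n x ω) ≤ empCondF X Y n x y ω} = ∅ := by
      ext y
      simp [natCast_mul_empMargF X, empCondF_eq X Y, hT]
    have hcount : ((Finset.range n).filter fun i => X i ω ≤ x ∧ u < Y i ω) = ∅ :=
      Finset.filter_eq_empty_iff.2 fun i hi h => by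
        have : i ∈ (Finset.range n).filter fun i => X i ω ≤ x := Finset.mem_filter.2 ⟨hi, h.1⟩
        simp [hT] at this
    rw [empCondQ, hS, Real.sInf_empty, hcount]
    simpa using hu
  · simp_rw [empCondQ, one_sub_div_le_empCondF_iff X Y x n k _ ω hT]
    simpa only [Finset.filter_filter] using
      sInf_le_iff_card_filter_lt_le ((Finset.range n).filter fun i => X i ω ≤ x) (Y · ω) k hu

lemma finite_setOf_fdh (n : ℕ) (ω : Ω) : {y : ℝ | ∃ i < n, X i ω ≤ x ∧ Y i ω = y}.Finite :=
  ((finite_Iio n).image fun i => Y i ω).subset fun _ ⟨i, hi, _, hy⟩ => ⟨i, hi, hy⟩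

lemma fdh_le_iff (n : ℕ) {u : ℝ} (hu : 0 ≤ u) (ω : Ω) :
    fdh X Y n x ω ≤ u ↔ ∀ i < n, X i ω ≤ x → Y i ω ≤ u := by
  refine ⟨fun h i hi hXi => ?_, fun h => Real.sSup_le ?_ hu⟩
  · exact (le_csSup (finite_setOf_fdh X Y x n ω).bddAbove ⟨i, hi, hXi, rfl⟩).trans h
  · rintro _ ⟨i, hi, hXi, rfl⟩
    exact h i hi hXi

lemma exists_neg_of_fdh_le (n : ℕ) {u : ℝ} (hu : u < 0) (ω : Ω) (h : fdh X Y n x ω ≤ u) :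
    ∃ i < n, Y i ω < 0 := by
  rw [fdh] at h
  have hne : {y : ℝ | ∃ i < n, X i ω ≤ x ∧ Y i ω = y}.Nonempty := by
    by_contra hempty
    rw [not_nonempty_iff_eq_empty.1 hempty, Real.sSup_empty] at h
    linarith
  obtain ⟨i, hi, -, hYi⟩ := hne.csSup_mem (finite_setOf_fdh X Y x n ω)
  exact ⟨i, hi, by linarith⟩

end Estimators

section Binomial

variable {α β : Type*} {Z : ℕ → α → β} {A : Set β} {n : ℕ}

open Classical in
lemma setOf_filter_mem_eq {s : Finset ℕ} (hs : s ⊆ Finset.range n) :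
    {ω | (Finset.range n).filter (fun i => Z i ω ∈ A) = s} =
      ⋂ i ∈ Finset.range n, Z i ⁻¹' (if i ∈ s then A else Aᶜ) := by
  ext ω
  simp only [mem_ofPred_eq, mem_iInter, Finset.ext_iff, Finset.mem_filter]
  constructor
  · intro h i hi
    split_ifs with his <;> grind
  · intro h i
    by_cases his : i ∈ s <;> grind

open Classical in
lemma setOf_card_filter_mem_eq (j : ℕ) :
    {ω | ((Finset.range n).filter fun i => Z i ω ∈ A).card = j} =
      ⋃ s ∈ (Finset.range n).powersetCard j,
        {ω | (Finset.range n).filter (fun i => Z i ω ∈ A) = s} := by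
  ext ω
  simp only [mem_ofPred_eq, mem_iUnion, Finset.mem_powersetCard, exists_prop]
  exact ⟨fun h => ⟨_, ⟨Finset.filter_subset _ _, h⟩, rfl⟩, fun ⟨s, ⟨_, hs⟩, h⟩ => h ▸ hs⟩

variable [MeasurableSpace α] [MeasurableSpace β]

open Classical in
lemma measurableSet_setOf_filter_mem_eq (hZ : ∀ i, Measurable (Z i)) (hA : MeasurableSet A)
    {s : Finset ℕ} (hs : s ⊆ Finset.range n) :
    MeasurableSet {ω | (Finset.range n).filter (fun i => Z i ω ∈ A) = s} := by
  rw [setOf_filter_mem_eq hs]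
  refine .biInter (Finset.countable_toSet _) fun i _ => hZ i ?_
  split_ifs
  exacts [hA, hA.compl]

open Classical in
lemma measurableSet_setOf_card_filter_mem_eq (hZ : ∀ i, Measurable (Z i))
    (hA : MeasurableSet A) (j : ℕ) :
    MeasurableSet {ω | ((Finset.range n).filter fun i => Z i ω ∈ A).card = j} := by
  rw [setOf_card_filter_mem_eq]
  exact .biUnion (Finset.countable_toSet _) fun s hs =>
    measurableSet_setOf_filter_mem_eq hZ hA (Finset.mem_powersetCard.1 hs).1

variable {μ : Measure α} [IsProbabilityMeasure μ]

open Classical in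
lemma measureReal_filter_mem_eq (hZ : ∀ i, Measurable (Z i)) (hind : iIndepFun Z μ)
    (hident : ∀ i, IdentDistrib (Z i) (Z 0) μ μ) (hA : MeasurableSet A)
    {s : Finset ℕ} (hs : s ⊆ Finset.range n) :
    μ.real {ω | (Finset.range n).filter (fun i => Z i ω ∈ A) = s} =
      μ.real (Z 0 ⁻¹' A) ^ s.card * (1 - μ.real (Z 0 ⁻¹' A)) ^ (n - s.card) := by
  have hfactor : ∀ i, μ.real (Z i ⁻¹' (if i ∈ s then A else Aᶜ)) =
      if i ∈ s then μ.real (Z 0 ⁻¹' A) else 1 - μ.real (Z 0 ⁻¹' A) := by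
    intro i
    split_ifs
    · rw [measureReal_def, (hident i).measure_mem_eq hA, measureReal_def]
    · rw [preimage_compl, probReal_compl_eq_one_sub (hZ i hA), measureReal_def,
        (hident i).measure_mem_eq hA, measureReal_def]
  have hmeas : ∀ i ∈ Finset.range n, MeasurableSet (if i ∈ s then A else Aᶜ) := fun i _ => by
    split_ifs
    exacts [hA, hA.compl]
  rw [setOf_filter_mem_eq hs, measureReal_def, hind.measure_inter_preimage_eq_mul _ hmeas,
    ENNReal.toReal_prod]
  simp only [← measureReal_def, hfactor, Finset.prod_ite, Finset.prod_const]
  have hin : (Finset.range n).filter (· ∈ s) = s := by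
    rw [Finset.filter_mem_eq_inter, Finset.inter_eq_right.2 hs]
  rw [hin, Finset.filter_not, hin, Finset.card_sdiff_of_subset hs, Finset.card_range]

open Classical in
lemma measureReal_card_filter_mem_eq (hZ : ∀ i, Measurable (Z i)) (hind : iIndepFun Z μ)
    (hident : ∀ i, IdentDistrib (Z i) (Z 0) μ μ) (hA : MeasurableSet A) (j : ℕ) :
    μ.real {ω | ((Finset.range n).filter fun i => Z i ω ∈ A).card = j} =
      n.choose j * μ.real (Z 0 ⁻¹' A) ^ j * (1 - μ.real (Z 0 ⁻¹' A)) ^ (n - j) := by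
  rw [setOf_card_filter_mem_eq, measureReal_biUnion_finset]
  · rw [Finset.sum_congr rfl fun s hs => by
      rw [measureReal_filter_mem_eq hZ hind hident hA (Finset.mem_powersetCard.1 hs).1,
        (Finset.mem_powersetCard.1 hs).2],
      Finset.sum_const, Finset.card_powersetCard, Finset.card_range, nsmul_eq_mul, mul_assoc]
  · exact fun s _ t _ hst => Set.disjoint_left.2 fun ω hs ht => hst (hs.symm.trans ht)
  · exact fun s hs => measurableSet_setOf_filter_mem_eq hZ hA (Finset.mem_powersetCard.1 hs).1

open Classical in
lemma measureReal_card_filter_mem_le (hZ : ∀ i, Measurable (Z i)) (hind : iIndepFun Z μ)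
    (hident : ∀ i, IdentDistrib (Z i) (Z 0) μ μ) (hA : MeasurableSet A) (k : ℕ) :
    μ.real {ω | ((Finset.range n).filter fun i => Z i ω ∈ A).card ≤ k} =
      binomialCDF n k (μ.real (Z 0 ⁻¹' A)) := by
  have hunion : {ω | ((Finset.range n).filter fun i => Z i ω ∈ A).card ≤ k} =
      ⋃ j ∈ Finset.range (k + 1),
        {ω | ((Finset.range n).filter fun i => Z i ω ∈ A).card = j} := by
    ext ω
    simp
  rw [hunion, measureReal_biUnion_finset, binomialCDF]
  · exact Finset.sum_congr rfl fun j _ => measureReal_card_filter_mem_eq hZ hind hident hA j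
  · exact fun i _ j _ hij => Set.disjoint_left.2 fun ω hi hj => hij (hi.symm.trans hj)
  · exact fun j _ => measurableSet_setOf_card_filter_mem_eq hZ hA j

end Binomial

lemma IsCDF.nonneg {G : ℝ → ℝ} (hG : IsCDF G) (t : ℝ) : 0 ≤ G t :=
  le_of_tendsto hG.2.2.1 <| (eventually_le_atBot t).mono fun _ hs => hG.1 hs

lemma IsCDF.le_one {G : ℝ → ℝ} (hG : IsCDF G) (t : ℝ) : G t ≤ 1 :=
  ge_of_tendsto hG.2.2.2 <| (eventually_ge_atTop t).mono fun _ hs => hG.1 hs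

section Sampling

variable {Ω : Type*} [MeasureSpace Ω] {p : ℕ} (X : ℕ → Ω → (Fin p → ℝ)) (Y : ℕ → Ω → ℝ)
  (x : Fin p → ℝ)

/-- The success probability `ℙ(X ≤ x, Y > u)` of the binomial count behind both estimators.
For `u < 0` both estimators are a.s. above `u`, which the value `1` reproduces. -/
def exceedProb (u : ℝ) : ℝ :=
  if 0 ≤ u then (ℙ {ω | X 0 ω ≤ x ∧ u < Y 0 ω}).toReal else 1

lemma exceedProb_nonneg (u : ℝ) : 0 ≤ exceedProb X Y x u := by
  unfold exceedProb
  split_ifs <;> simp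

lemma exceedProb_le_one [IsProbabilityMeasure (ℙ : Measure Ω)] (u : ℝ) :
    exceedProb X Y x u ≤ 1 := by
  unfold exceedProb
  split_ifs
  exacts [measureReal_le_one, le_rfl]

variable {X Y}

lemma measure_setOf_neg_eq_zero (hiid : IID X Y) (hY : ∀ᵐ ω ∂ℙ, 0 ≤ Y 0 ω) (i : ℕ) :
    ℙ {ω | Y i ω < 0} = 0 := by
  have hset : {ω | Y i ω < 0} = (fun ω => (X i ω, Y i ω)) ⁻¹' (Prod.snd ⁻¹' Iio 0) := rfl
  rw [hset, (hiid.2.2 i).measure_mem_eq (measurable_snd measurableSet_Iio)]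
  exact measure_mono_null (fun ω (h : Y 0 ω < 0) => not_le.2 h) (ae_iff.1 hY)

variable [IsProbabilityMeasure (ℙ : Measure Ω)]

open Classical in
lemma measureReal_card_exceed_le (hiid : IID X Y) (n k : ℕ) (u : ℝ) :
    (ℙ {ω | ((Finset.range n).filter fun i => X i ω ≤ x ∧ u < Y i ω).card ≤ k}).toReal =
      binomialCDF n k (ℙ {ω | X 0 ω ≤ x ∧ u < Y 0 ω}).toReal := by
  convert measureReal_card_filter_mem_le (Z := fun i ω => (X i ω, Y i ω))
    (A := {z | z.1 ≤ x ∧ u < z.2}) (n := n) hiid.1 hiid.2.1 hiid.2.2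
    ((measurableSet_Iic.preimage measurable_fst).inter (measurableSet_Ioi.preimage measurable_snd))
    k
  · rw [measureReal_def]
    congr!
  · rfl

open Classical in
lemma measureReal_fdh_le (hiid : IID X Y) (hY : ∀ᵐ ω ∂ℙ, 0 ≤ Y 0 ω) {n : ℕ} (hn : n ≠ 0)
    (u : ℝ) : (ℙ {ω | fdh X Y n x ω ≤ u}).toReal = (1 - exceedProb X Y x u) ^ n := by
  by_cases hu : 0 ≤ u
  · have hevent : {ω | fdh X Y n x ω ≤ u} =
        {ω | ((Finset.range n).filter fun i => X i ω ≤ x ∧ u < Y i ω).card ≤ 0} := by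
      ext ω
      simp [fdh_le_iff X Y x n hu, Finset.filter_eq_empty_iff]
    rw [hevent, measureReal_card_exceed_le x hiid, binomialCDF_zero, exceedProb, if_pos hu]
  · have hnull : ℙ {ω | fdh X Y n x ω ≤ u} = 0 :=
      measure_mono_null (fun ω h => by
          obtain ⟨i, hi, hYi⟩ := exists_neg_of_fdh_le X Y x n (not_le.1 hu) ω h
          exact mem_iUnion₂.2 ⟨i, hi, hYi⟩)
        ((measure_biUnion_null_iff (finite_Iio n).countable).2 fun i _ =>
          measure_setOf_neg_eq_zero hiid hY i)
    rw [hnull, exceedProb, if_neg hu, sub_self, zero_pow hn, ENNReal.toReal_zero]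

lemma measureReal_empCondQ_le (hiid : IID X Y) {n k : ℕ} (hkn : k < n) (u : ℝ) :
    (ℙ {ω | empCondQ X Y n (1 - k / (n * empMargF X n x ω)) x ω ≤ u}).toReal =
      binomialCDF n k (exceedProb X Y x u) := by
  by_cases hu : 0 ≤ u
  · simp_rw [empCondQ_le_iff X Y x n k hu]
    rw [measureReal_card_exceed_le x hiid, exceedProb, if_pos hu]
  · have hempty : {ω | empCondQ X Y n (1 - k / (n * empMargF X n x ω)) x ω ≤ u} = ∅ :=
      eq_empty_of_forall_notMem fun ω h => hu ((Real.sInf_nonneg fun _ hy => hy.1).trans h)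
    rw [hempty, exceedProb, if_neg hu, binomialCDF_one hkn, measure_empty, ENNReal.toReal_zero]

end Sampling

variable {Ω : Type*} [MeasureSpace Ω] {p : ℕ}

theorem statement6_general
    [IsProbabilityMeasure (ℙ : Measure Ω)]
    (X : ℕ → Ω → (Fin p → ℝ)) (Y : ℕ → Ω → ℝ) (hiid : IID X Y)
    (hpos : ∀ᵐ ω ∂ℙ, (∀ i, 0 ≤ X 0 ω i) ∧ 0 ≤ Y 0 ω)
    (x : Fin p → ℝ)
    (b : ℕ → ℝ) (hb : ∀ n, 0 < b n)
    (G : ℝ → ℝ) (hG : IsCDF G)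
    (hconv : TendstoInDist (fun n ω => (fdh X Y n x ω - phi X Y x) / b n) G)
    (k : ℕ) :
    TendstoInDist
      (fun n ω =>
        (empCondQ X Y n (1 - (k : ℝ) / ((n : ℝ) * empMargF X n x ω)) x ω - phi X Y x) / b n)
      (fun y => G y * ∑ i ∈ Finset.range (k + 1),
        (-Real.log (G y)) ^ i / (Nat.factorial i : ℝ)) := by
  intro y hy
  have hGy : ContinuousAt G y := hG.1.continuousAt_of_strictMonoOn_comp isClosed_Icc
    (fun t => ⟨hG.nonneg t, hG.le_one t⟩) (strictMonoOn_poissonCDF k) (hG.2.1 y) hy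
  have hevent : ∀ (n : ℕ) (V : Ω → ℝ),
      {ω | (V ω - phi X Y x) / b n ≤ y} = {ω | V ω ≤ phi X Y x + y * b n} := fun n V => by
    ext ω
    simp only [mem_ofPred_eq, div_le_iff₀ (hb n), sub_le_iff_le_add']
  set q := fun n : ℕ => exceedProb X Y x (phi X Y x + y * b n)
  have hfdh : Tendsto (fun n => (1 - q n) ^ n) atTop (𝓝 (G y)) :=
    (hconv y hGy).congr' <| (eventually_ne_atTop 0).mono fun n hn => by
      rw [hevent]
      exact measureReal_fdh_le x hiid (hpos.mono fun _ h => h.2) hn _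
  refine (tendsto_binomialCDF (fun n => exceedProb_nonneg X Y x _)
    (fun n => exceedProb_le_one X Y x _) hfdh k).congr' ?_
  filter_upwards [eventually_gt_atTop k] with n hn
  rw [hevent]
  exact (measureReal_empCondQ_le x hiid hn _).symm

/-- Theorem 2.2(i): if the normalized FDH estimator converges in distribution to `G_x`,
then for any fixed integer `k ≥ 0` the order-`k` quantile-type estimator
`φ̂_{1-k/(n F̂_X(x))}(x)`, normalized in the same way, converges in distribution to
`H_x(y) = G_x(y) ∑_{i=0}^k (-log G_x(y))^i / i!`. -/
theorem statement6
    [IsProbabilityMeasure (ℙ : Measure Ω)]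
    (X : ℕ → Ω → (Fin p → ℝ)) (Y : ℕ → Ω → ℝ) (hiid : IID X Y)
    (hpos : ∀ᵐ ω ∂ℙ, (∀ i, 0 ≤ X 0 ω i) ∧ 0 ≤ Y 0 ω)
    (x : Fin p → ℝ) (hxpos : ∀ i, 0 ≤ x i) (hx : 0 < margF X x)
    (hphi : BddAbove {y : ℝ | 0 ≤ y ∧ condF X Y x y < 1})
    (b : ℕ → ℝ) (hb : ∀ n, 0 < b n)
    (G : ℝ → ℝ) (hG : IsCDF G) (hGnd : NonDegenerate G)
    (hconv : TendstoInDist (fun n ω => (fdh X Y n x ω - phi X Y x) / b n) G)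
    (k : ℕ) :
    TendstoInDist
      (fun n ω =>
        (empCondQ X Y n (1 - (k : ℝ) / ((n : ℝ) * empMargF X n x ω)) x ω - phi X Y x) / b n)
      (fun y => G y * ∑ i ∈ Finset.range (k + 1),
        (-Real.log (G y)) ^ i / (Nat.factorial i : ℝ)) :=
  statement6_general X Y hiid hpos x b hb G hG hconv k

end FrontierEV
end
end
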